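/- There exists an absolute constant c > 0 such that for all sufficiently large y, Σ_{n ≤ y} 1/(n·τ(n)) ≥ c·(log y)^{1/2}. -/

import Mathlib

/-!
For squarefree `N`, `τ(N) = τ(d) τ(e)` for every factorisation `N = d e`, so
`∑_{de = N} 1/(d τ(d)) · 1/(e τ(e)) = τ(N) · 1/(N τ(N)) = 1/N`. Hence the square of
`S(x) = ∑_{n ≤ x} 1/(n τ(n))` dominates the harmonic sum over squarefree `N ≤ x`. Writing
`n = b² a` with `a` squarefree and using `∑ 1/b² ≤ 2`, that sum is at least half of the full
harmonic sum, which exceeds `log x`. So `S(x)² ≥ (log x)/2`.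
-/

open Finset

noncomputable def invMulCardDivisors (n : ℕ) : ℝ := 1 / (n * n.divisors.card)

lemma invMulCardDivisors_nonneg (n : ℕ) : 0 ≤ invMulCardDivisors n := by
  unfold invMulCardDivisors; positivity

lemma Nat.card_divisorsAntidiagonal (n : ℕ) : #n.divisorsAntidiagonal = #n.divisors := by
  rw [← Nat.map_div_right_divisors, card_map]

lemma sum_divisorsAntidiagonal_invMulCardDivisors {N : ℕ} (hN : Squarefree N) :
    ∑ p ∈ N.divisorsAntidiagonal, invMulCardDivisors p.1 * invMulCardDivisors p.2 =
      (N : ℝ)⁻¹ := by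
  have hterm : ∀ p ∈ N.divisorsAntidiagonal,
      invMulCardDivisors p.1 * invMulCardDivisors p.2 = 1 / (N * #N.divisors) := by
    rintro ⟨d, e⟩ hde
    obtain ⟨rfl, -⟩ := Nat.mem_divisorsAntidiagonal.mp hde
    rw [(Nat.coprime_of_squarefree_mul hN).card_divisors_mul, invMulCardDivisors,
      invMulCardDivisors, div_mul_div_comm, one_mul]
    push_cast
    ring
  have hτ : (#N.divisors : ℝ) ≠ 0 := by
    exact_mod_cast (Nat.nonempty_divisors.mpr hN.ne_zero).card_pos.ne'
  rw [sum_congr rfl hterm, sum_const, Nat.card_divisorsAntidiagonal, nsmul_eq_mul]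
  field_simp

lemma sum_Icc_inv_sq_le_two (x : ℕ) : ∑ b ∈ Icc 1 x, ((b : ℝ) ^ 2)⁻¹ ≤ 2 := by
  have := sum_Ioo_inv_sq_le (α := ℝ) 0 (x + 1)
  rwa [Ioo_add_one_right_eq_Ioc, ← Icc_add_one_left_eq_Ioc, zero_add, Nat.cast_zero, zero_add,
    div_one] at this

lemma filter_mul_eq_Icc_product_Icc {N x : ℕ} (hN : N ∈ Icc 1 x) :
    {p ∈ Icc 1 x ×ˢ Icc 1 x | p.1 * p.2 = N} = N.divisorsAntidiagonal := by
  rw [mem_Icc] at hN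
  ext ⟨d, e⟩
  simp only [mem_filter, mem_product, mem_Icc, Nat.mem_divisorsAntidiagonal]
  constructor
  · rintro ⟨-, hde⟩; exact ⟨hde, by omega⟩
  · rintro ⟨rfl, -⟩
    have hd : 0 < d := Nat.pos_of_mul_pos_right hN.1
    have he : 0 < e := Nat.pos_of_mul_pos_left hN.1
    have := Nat.le_mul_of_pos_right d he
    have := Nat.le_mul_of_pos_left e hd
    refine ⟨⟨⟨?_, ?_⟩, ?_, ?_⟩, rfl⟩ <;> omega

lemma sum_squarefree_inv_le_sq (x : ℕ) :
    ∑ N ∈ Icc 1 x with Squarefree N, (N : ℝ)⁻¹ ≤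
      (∑ n ∈ Icc 1 x, invMulCardDivisors n) ^ 2 := by
  calc ∑ N ∈ Icc 1 x with Squarefree N, (N : ℝ)⁻¹
      = ∑ N ∈ Icc 1 x with Squarefree N, ∑ p ∈ N.divisorsAntidiagonal,
          invMulCardDivisors p.1 * invMulCardDivisors p.2 :=
        sum_congr rfl fun N hN ↦
          (sum_divisorsAntidiagonal_invMulCardDivisors (mem_filter.mp hN).2).symm
    _ = ∑ N ∈ Icc 1 x with Squarefree N, ∑ p ∈ Icc 1 x ×ˢ Icc 1 x with p.1 * p.2 = N,
          invMulCardDivisors p.1 * invMulCardDivisors p.2 :=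
        sum_congr rfl fun N hN ↦ by rw [filter_mul_eq_Icc_product_Icc (mem_filter.mp hN).1]
    _ ≤ ∑ p ∈ Icc 1 x ×ˢ Icc 1 x, invMulCardDivisors p.1 * invMulCardDivisors p.2 :=
        sum_fiberwise_le_sum_of_sum_fiber_nonneg fun _ _ ↦
          sum_nonneg fun _ _ ↦
            mul_nonneg (invMulCardDivisors_nonneg _) (invMulCardDivisors_nonneg _)
    _ = (∑ n ∈ Icc 1 x, invMulCardDivisors n) ^ 2 := by rw [sq, sum_mul_sum, sum_product]

lemma Icc_subset_image_sq_mul_squarefree (x : ℕ) :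
    Icc 1 x ⊆ ({N ∈ Icc 1 x | Squarefree N} ×ˢ Icc 1 x).image fun p ↦ p.2 ^ 2 * p.1 := by
  intro n hn
  obtain ⟨a, b, rfl, ha⟩ := Nat.sq_mul_squarefree n
  rw [mem_Icc] at hn
  have ha0 : 0 < a := Nat.pos_of_mul_pos_left hn.1
  have hb0 : 0 < b := pos_of_ne_zero (by rintro rfl; simp at hn)
  have := Nat.le_mul_of_pos_left a (pow_pos hb0 2)
  have := Nat.le_mul_of_pos_right (b ^ 2) ha0
  have := Nat.le_self_pow two_ne_zero b
  refine mem_image.mpr ⟨(a, b), ?_, rfl⟩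
  simp only [mem_product, mem_filter, mem_Icc]
  exact ⟨⟨⟨ha0, by omega⟩, ha⟩, hb0, by omega⟩

lemma sum_inv_le_two_mul_sum_squarefree_inv (x : ℕ) :
    ∑ n ∈ Icc 1 x, (n : ℝ)⁻¹ ≤ 2 * ∑ N ∈ Icc 1 x with Squarefree N, (N : ℝ)⁻¹ :=
  calc ∑ n ∈ Icc 1 x, (n : ℝ)⁻¹
      ≤ ∑ n ∈ ({N ∈ Icc 1 x | Squarefree N} ×ˢ Icc 1 x).image (fun p ↦ p.2 ^ 2 * p.1),
          ((n : ℕ) : ℝ)⁻¹ :=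
        sum_le_sum_of_subset_of_nonneg (Icc_subset_image_sq_mul_squarefree x)
          fun _ _ _ ↦ by positivity
    _ ≤ ∑ p ∈ {N ∈ Icc 1 x | Squarefree N} ×ˢ Icc 1 x, ((p.2 ^ 2 * p.1 : ℕ) : ℝ)⁻¹ :=
        sum_image_le_of_nonneg fun _ _ ↦ by positivity
    _ = (∑ b ∈ Icc 1 x, ((b : ℝ) ^ 2)⁻¹) * ∑ N ∈ Icc 1 x with Squarefree N, (N : ℝ)⁻¹ := by
        rw [sum_mul_sum, sum_product_right]
        push_cast
        simp only [mul_inv]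
    _ ≤ 2 * ∑ N ∈ Icc 1 x with Squarefree N, (N : ℝ)⁻¹ :=
        mul_le_mul_of_nonneg_right (sum_Icc_inv_sq_le_two x) (sum_nonneg fun _ _ ↦ by positivity)

/-- There exists an absolute constant `c > 0` such that for all sufficiently large `y`,
`∑_{n ≤ y} 1/(n·τ(n)) ≥ c·(log y)^(1/2)`. -/
theorem sum_inv_n_tau_lower :
    ∃ c : ℝ, 0 < c ∧ ∃ y₀ : ℝ, ∀ y : ℝ, y ≥ y₀ →
      (∑ n ∈ Finset.Icc 1 ⌊y⌋₊, (1 : ℝ) / (n * n.divisors.card)) ≥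
        c * (Real.log y) ^ ((1 : ℝ) / 2) := by
  refine ⟨1 / 2, by norm_num, 0, fun y hy ↦ ?_⟩
  set S := ∑ n ∈ Icc 1 ⌊y⌋₊, invMulCardDivisors n
  have hlog : Real.log y ≤ 2 * S ^ 2 :=
    calc Real.log y ≤ harmonic ⌊y⌋₊ := log_le_harmonic_floor y hy
      _ = ∑ n ∈ Icc 1 ⌊y⌋₊, (n : ℝ)⁻¹ := by simp [harmonic_eq_sum_Icc]
      _ ≤ 2 * ∑ N ∈ Icc 1 ⌊y⌋₊ with Squarefree N, (N : ℝ)⁻¹ :=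
        sum_inv_le_two_mul_sum_squarefree_inv _
      _ ≤ 2 * S ^ 2 := by gcongr; exact sum_squarefree_inv_le_sq _
  have hS : 0 ≤ S := sum_nonneg fun n _ ↦ invMulCardDivisors_nonneg n
  have hsqrt : √(Real.log y) ≤ 2 * S := (Real.sqrt_le_left (by positivity)).mpr (by nlinarith)
  change 1 / 2 * Real.log y ^ ((1 : ℝ) / 2) ≤ S
  rw [← Real.sqrt_eq_rpow]
  linarith
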